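/- arXiv:2102.06538 — 2 statements merged into one kernel-verified Lean document; each statement's English description precedes it below -/
import Mathlib

section
/- Let W be a suitable basis and U an integral basis of A, and let T ∈ K[x]^{n×n} be such that W = TU. Let e ∈ K[x] and M ∈ K[x]^{n×n} be such that eW′ = MW with gcd(e, entries of M) = 1. If a ∈ K̄ is a root of det(T), then a is a root of e. Consequently, if W is not a local integral basis at some a ∈ K̄, then a is a root of e. -/
noncomputable section
open scoped Classical

open Polynomial

/-- Termwise derivative (w.r.t. `x`) of a generalized (Hahn/Puiseux) series in `x - a`:
the exponent-`q` coefficient of `P'` is `(q+1)` times the exponent-`(q+1)` coefficient of `P`. -/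
def hderiv {F : Type} [Field F] (P : HahnSeries ℚ F) : HahnSeries ℚ F where
  coeff q := ((q + 1 : ℚ) : F) * P.coeff (q + 1)
  isPWO_support' := by
    have hsub : (Function.support fun q : ℚ => ((q + 1 : ℚ) : F) * P.coeff (q + 1))
        ⊆ (fun q : ℚ => q - 1) '' P.support := by
      intro q hq
      refine ⟨q + 1, ?_, by ring⟩
      intro h0
      simp [Function.mem_support, h0] at hq
    exact (P.isPWO_support.image_of_monotoneOn
      (fun x _ y _ hxy => by simpa using hxy)).mono hsub

/-- The valuation of a generalized (Hahn/Puiseux) series: the least exponent occurring,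
and `⊤` for the zero series. -/
def hval {F : Type} [Field F] (P : HahnSeries ℚ F) : WithTop ℚ :=
  if h : P = 0 then ⊤
  else ((P.isWF_support.min (HahnSeries.support_nonempty_iff.mpr h) : ℚ) : WithTop ℚ)

/-- A series is ramified if some exponent in its support is not an integer. -/
def Ramified {F : Type} [Field F] (P : HahnSeries ℚ F) : Prop :=
  ∃ q ∈ P.support, ∀ z : ℤ, (z : ℚ) ≠ q

/-- The set of fractional (non-integer) exponents occurring in a series. -/
def fracSupport {F : Type} [Field F] (P : HahnSeries ℚ F) : Set ℚ :=
  {q | q ∈ P.support ∧ ∀ z : ℤ, (z : ℚ) ≠ q}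

/-- The minimal fractional exponent `δ(P)` of a series; `⊤` if `P` is not ramified. -/
def delta {F : Type} [Field F] (P : HahnSeries ℚ F) : WithTop ℚ :=
  if h : (fracSupport P).Nonempty then
    (((P.isWF_support.mono (fun q hq => hq.1)).min h : ℚ) : WithTop ℚ)
  else ⊤

/-- A Hahn series over `ℚ` is a Puiseux series if its exponents have a common denominator. -/
def IsPuiseux {F : Type} [Field F] (P : HahnSeries ℚ F) : Prop :=
  ∃ r : ℕ, 0 < r ∧ ∀ q ∈ P.support, ∃ z : ℤ, (z : ℚ) / r = q

/-! ### The algebraic function field `A = K(x)[y]/⟨m⟩` -/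

/-- The canonical image in `A = K(x)[y]/⟨m⟩` of a polynomial `p ∈ K[x]`. -/
def toA {K : Type} [Field K] (m : Polynomial (RatFunc K)) (p : Polynomial K) :
    AdjoinRoot m :=
  algebraMap (RatFunc K) (AdjoinRoot m) (algebraMap (Polynomial K) (RatFunc K) p)

/-- `D` is the derivation on `A = K(x)[y]/⟨m⟩` extending `d/dx` on `K(x)`:
it is additive, satisfies the Leibniz rule, and restricts to `d/dx` on `K[x]`
(hence, being a derivation on a field, on all of `K(x)`). -/
structure IsDerivationOnA {K : Type} [Field K] (m : Polynomial (RatFunc K))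
    (D : AdjoinRoot m → AdjoinRoot m) : Prop where
  map_add : ∀ f g, D (f + g) = D f + D g
  leibniz : ∀ f g, D (f * g) = f * D g + g * D f
  map_poly : ∀ p : Polynomial K, D (toA m p) = toA m (Polynomial.derivative p)

/-- `W` is a basis of `A` as a vector space over `K(x)`. -/
def IsKxBasis {K : Type} [Field K] {m : Polynomial (RatFunc K)}
    (W : Fin m.natDegree → AdjoinRoot m) : Prop :=
  LinearIndependent (RatFunc K) W ∧ Submodule.span (RatFunc K) (Set.range W) = ⊤

/-- `e W′ = M W` componentwise. -/
def DerivRel {K : Type} [Field K] {m : Polynomial (RatFunc K)}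
    (D : AdjoinRoot m → AdjoinRoot m) (W : Fin m.natDegree → AdjoinRoot m)
    (e : Polynomial K) (M : Matrix (Fin m.natDegree) (Fin m.natDegree) (Polynomial K)) : Prop :=
  ∀ i, toA m e * D (W i) = ∑ j, toA m (M i j) * W j

/-- `gcd(e, m₁₁, …, mₙₙ) = 1`: the only common divisors of `e` and the entries of `M`
are units. -/
def GcdOne {K : Type} [Field K] {n : ℕ}
    (e : Polynomial K) (M : Matrix (Fin n) (Fin n) (Polynomial K)) : Prop :=
  ∀ p : Polynomial K, p ∣ e → (∀ i j, p ∣ M i j) → IsUnit p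

/-! ### Puiseux expansions around a point `a` of the algebraic closure -/

/-- The family of the `n` distinct `K(x)`-embeddings of `A = K(x)[y]/⟨m⟩` into the field of
Puiseux series around a point `a`: each embedding is a ring homomorphism into the Hahn series
field whose values are Puiseux series, sending constants `c ∈ K` to constant series and the
rational function `x` to `a + (x - a)`, i.e. to the series `a + t` where `t` stands
for `x - a`. -/
structure EmbFamily (K F : Type) [Field K] [Field F] [Algebra K F]
    (m : Polynomial (RatFunc K)) (a : F) where
  emb : Fin m.natDegree → (AdjoinRoot m →+* HahnSeries ℚ F)
  emb_injective : Function.Injective emb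
  emb_C : ∀ i (c : K), emb i (toA m (Polynomial.C c)) = HahnSeries.single 0 (algebraMap K F c)
  emb_X : ∀ i, emb i (toA m Polynomial.X) =
    HahnSeries.single 0 a + HahnSeries.single 1 1
  emb_puiseux : ∀ i f, IsPuiseux (emb i f)

/-- The embeddings around `a` are differential homomorphisms: they intertwine the derivation
`D` on `A` with the termwise derivative of series. -/
def IsDiffFamily {K F : Type} [Field K] [Field F] [Algebra K F]
    {m : Polynomial (RatFunc K)} {a : F} (D : AdjoinRoot m → AdjoinRoot m)
    (σ : EmbFamily K F m a) : Prop :=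
  ∀ i f, σ.emb i (D f) = hderiv (σ.emb i f)

/-- `f ∈ A` is locally integral at `a`, i.e. `val_a(f) ≥ 0`: all Puiseux series associated
to `f` around `a` have nonnegative valuation. -/
def LocIntegralAt {K F : Type} [Field K] [Field F] [Algebra K F]
    {m : Polynomial (RatFunc K)} {a : F} (σ : EmbFamily K F m a)
    (f : AdjoinRoot m) : Prop :=
  ∀ i, 0 ≤ hval (σ.emb i f)

/-- `a` is a branch point of `f ∈ A`: one of the Puiseux series associated to `f` around `a`
is ramified. -/
def IsBranchPointOf {K F : Type} [Field K] [Field F] [Algebra K F]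
    {m : Polynomial (RatFunc K)} {a : F} (σ : EmbFamily K F m a)
    (f : AdjoinRoot m) : Prop :=
  ∃ i, Ramified (σ.emb i f)

/-- `f ∈ A` is (globally) integral: locally integral at every point `a` of the algebraic
closure of `K` (given the system `σ` of Puiseux expansions around each point). -/
def IntegralElem {K : Type} [Field K] {m : Polynomial (RatFunc K)}
    (σ : ∀ a : AlgebraicClosure K, EmbFamily K (AlgebraicClosure K) m a)
    (f : AdjoinRoot m) : Prop :=
  ∀ a, LocIntegralAt (σ a) f

/-- `W` is an integral basis of `A`: a `K(x)`-vector-space basis consisting of integral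
elements such that every integral element is a `K[x]`-linear combination of `W`. -/
def IsIntegralBasis {K : Type} [Field K] {m : Polynomial (RatFunc K)}
    (σ : ∀ a : AlgebraicClosure K, EmbFamily K (AlgebraicClosure K) m a)
    (W : Fin m.natDegree → AdjoinRoot m) : Prop :=
  IsKxBasis W ∧ (∀ i, IntegralElem σ (W i)) ∧
    ∀ f, IntegralElem σ f → ∃ c : Fin m.natDegree → Polynomial K,
      f = ∑ i, toA m (c i) * W i

/-- The rational function `r ∈ K(x)` has no pole at `a`: `r = p/q` with `q(a) ≠ 0`. -/
def NoPoleAt {K F : Type} [Field K] [Field F] [Algebra K F] (a : F) (r : RatFunc K) : Prop :=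
  ∃ p q : Polynomial K, Polynomial.aeval a q ≠ 0 ∧
    r * algebraMap (Polynomial K) (RatFunc K) q = algebraMap (Polynomial K) (RatFunc K) p

/-- `W` is a local integral basis of `A` at `a`: a `K(x)`-vector-space basis consisting of
elements that are locally integral at `a`, such that every element of `A` that is locally
integral at `a` is a linear combination of `W` with coefficients in `K(x)_a` (rational
functions without a pole at `a`). -/
def IsLocalIntegralBasisAt {K F : Type} [Field K] [Field F] [Algebra K F]
    {m : Polynomial (RatFunc K)} {a : F} (σ : EmbFamily K F m a)
    (W : Fin m.natDegree → AdjoinRoot m) : Prop :=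
  IsKxBasis W ∧ (∀ i, LocIntegralAt σ (W i)) ∧
    ∀ f, LocIntegralAt σ f → ∃ c : Fin m.natDegree → RatFunc K,
      (∀ i, NoPoleAt a (c i)) ∧ f = ∑ i, algebraMap (RatFunc K) (AdjoinRoot m) (c i) * W i


/-! If `e(a) ≠ 0`, the matrix `E = (σ_j(ω_i))` of Puiseux expansions of `W` at `a` has a
determinant `Δ` of order zero: differentiating the rows gives Liouville's formula
`e Δ' = tr(M) Δ`, and since `e` has order zero at `a` the left side has order `ord Δ - 1`
(when `ord Δ ≠ 0`) while the right side has order at least `ord Δ`. Cramer's rule then shows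
that the coordinates in `W` of an element locally integral at `a` have no pole at `a`, so `W` is
a local integral basis at `a`. Writing the integral basis as `U = C W` with `C` over `K(x)_a`,
`W = T U` gives `T C = 1`, so `det T` is a unit of `K(x)_a`, i.e. `det T (a) ≠ 0`. -/

namespace HahnSeries

section Nonneg

variable (Γ R : Type*) [AddCommMonoid Γ] [LinearOrder Γ] [IsOrderedCancelAddMonoid Γ]
  [CommRing R]

def nonnegSubring : Subring (HahnSeries Γ R) where
  carrier := {x | 0 ≤ x.orderTop}
  mul_mem' {x y} hx hy := show 0 ≤ (x * y).orderTop from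
    (add_nonneg hx hy).trans orderTop_add_le_mul
  one_mem' := by simpa [← single_zero_one] using orderTop_single_le (a := (0 : Γ)) (r := (1 : R))
  add_mem' {x y} hx hy := show 0 ≤ (x + y).orderTop from
    (le_min hx hy).trans min_orderTop_le_orderTop_add
  zero_mem' := by simp
  neg_mem' := by simp [orderTop_neg]

variable {Γ R}

theorem mem_nonnegSubring {x : HahnSeries Γ R} : x ∈ nonnegSubring Γ R ↔ 0 ≤ x.orderTop :=
  Iff.rfl

theorem single_mem_nonnegSubring {g : Γ} (hg : 0 ≤ g) (r : R) :
    single g r ∈ nonnegSubring Γ R :=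
  (WithTop.coe_nonneg.mpr hg).trans orderTop_single_le

omit [IsOrderedCancelAddMonoid Γ] in
theorem coeff_zero_eq_zero_of_orderTop_pos {x : HahnSeries Γ R} (hx : 0 < x.orderTop) :
    x.coeff 0 = 0 :=
  coeff_eq_zero_of_lt_orderTop (by exact_mod_cast hx)

omit [IsOrderedCancelAddMonoid Γ] in
theorem orderTop_pos_iff_coeff_zero {x : HahnSeries Γ R} (hx : 0 ≤ x.orderTop) :
    0 < x.orderTop ↔ x.coeff 0 = 0 :=
  ⟨coeff_zero_eq_zero_of_orderTop_pos,
    fun h0 => hx.lt_of_ne fun h => coeff_orderTop_ne h.symm h0⟩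

theorem orderTop_mul_pos {x y : HahnSeries Γ R} (hx : 0 < x.orderTop) (hy : 0 ≤ y.orderTop) :
    0 < (x * y).orderTop := by
  refine lt_of_lt_of_le ?_ orderTop_add_le_mul
  simpa using WithTop.add_lt_add_of_lt_of_le WithTop.zero_ne_top hx hy

theorem coeff_zero_mul_of_orderTop_nonneg {x y : HahnSeries Γ R} (hx : 0 ≤ x.orderTop)
    (hy : 0 ≤ y.orderTop) : (x * y).coeff 0 = x.coeff 0 * y.coeff 0 := by
  rcases hx.lt_or_eq with hx | hx
  · rw [coeff_zero_eq_zero_of_orderTop_pos hx, zero_mul,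
      coeff_zero_eq_zero_of_orderTop_pos (orderTop_mul_pos hx hy)]
  rcases hy.lt_or_eq with hy | hy
  · rw [coeff_zero_eq_zero_of_orderTop_pos hy, mul_zero, mul_comm,
      coeff_zero_eq_zero_of_orderTop_pos (orderTop_mul_pos hy hx.le)]
  have horder {z : HahnSeries Γ R} (hz : 0 = z.orderTop) : z.order = 0 := by
    rw [← WithTop.coe_eq_zero, order_eq_orderTop_of_ne_zero
      (orderTop_ne_top.mp (hz ▸ WithTop.zero_ne_top)), hz]
  simpa [leadingCoeff_eq, horder hx, horder hy] using coeff_mul_order_add_order x y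

def nonnegConstCoeff : nonnegSubring Γ R →+* R where
  toFun x := (x : HahnSeries Γ R).coeff 0
  map_one' := by simp
  map_mul' x y := coeff_zero_mul_of_orderTop_nonneg x.2 y.2
  map_zero' := rfl
  map_add' _ _ := rfl

theorem nonnegConstCoeff_apply (x : nonnegSubring Γ R) :
    nonnegConstCoeff x = (x : HahnSeries Γ R).coeff 0 := rfl

end Nonneg

section EulerOperator

variable {F : Type*} [Field F]

def eulerOp (P : HahnSeries ℚ F) : HahnSeries ℚ F where
  coeff q := q * P.coeff q
  isPWO_support' := P.isPWO_support.mono fun _ hq => right_ne_zero_of_mul hq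

theorem coeff_eulerOp (P : HahnSeries ℚ F) (q : ℚ) : (eulerOp P).coeff q = q * P.coeff q := rfl

theorem support_eulerOp_subset (P : HahnSeries ℚ F) : (eulerOp P).support ⊆ P.support :=
  fun _ hq => right_ne_zero_of_mul hq

theorem orderTop_eulerOp {P : HahnSeries ℚ F} {c : ℚ} (hP : P.orderTop = c)
    (hc : (c : F) ≠ 0) :
    (eulerOp P).orderTop = c :=
  orderTop_eq_of_le (mul_ne_zero hc (coeff_orderTop_ne hP)) fun _ hq =>
    WithTop.coe_le_coe.mp (hP ▸ orderTop_le_of_coeff_ne_zero (support_eulerOp_subset P hq))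

theorem eulerOp_mul [CharZero F] (P Q : HahnSeries ℚ F) :
    eulerOp (P * Q) = P * eulerOp Q + Q * eulerOp P := by
  ext q
  rw [coeff_add, coeff_eulerOp, coeff_mul, mul_comm Q (eulerOp P),
    coeff_mul_right' Q.isPWO_support (support_eulerOp_subset Q),
    coeff_mul_left' P.isPWO_support (support_eulerOp_subset P), Finset.mul_sum,
    ← Finset.sum_add_distrib]
  refine Finset.sum_congr rfl fun ij hij => ?_
  rw [← (Finset.mem_antidiagonal.mp hij).2.2, coeff_eulerOp, coeff_eulerOp, Rat.cast_add]
  ring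

end EulerOperator

end HahnSeries

section SeriesDerivative

open HahnSeries

variable {F : Type} [Field F]

-- `d/dt = t⁻¹ (t d/dt)`: the Euler operator obeys the Leibniz rule without any index shift
theorem hderiv_eq_single_mul_eulerOp (P : HahnSeries ℚ F) :
    hderiv P = single (-1) 1 * eulerOp P := by
  ext q
  rw [coeff_single_mul, sub_neg_eq_add, one_mul, coeff_eulerOp]
  rfl

variable (F) in
def hderivAddHom : HahnSeries ℚ F →+ HahnSeries ℚ F :=
  AddMonoidHom.mk' hderiv fun _ _ => by
    ext
    exact mul_add _ _ _

variable [CharZero F]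

theorem hderiv_mul (P Q : HahnSeries ℚ F) :
    hderiv (P * Q) = P * hderiv Q + Q * hderiv P := by
  simp only [hderiv_eq_single_mul_eulerOp, eulerOp_mul]
  ring

theorem orderTop_hderiv {P : HahnSeries ℚ F} {c : ℚ} (hP : P.orderTop = c) (hc : c ≠ 0) :
    (hderiv P).orderTop = ((-1 + c : ℚ) : WithTop ℚ) := by
  rw [hderiv_eq_single_mul_eulerOp, orderTop_mul, orderTop_single one_ne_zero,
    orderTop_eulerOp hP (Rat.cast_ne_zero.mpr hc), WithTop.coe_add]

end SeriesDerivative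

namespace AddMonoidHom

variable {R : Type*} [CommRing R] (D : R →+ R) (hD : ∀ x y, D (x * y) = x * D y + y * D x)
include hD

theorem map_prod_of_leibniz {ι : Type*} [DecidableEq ι] (s : Finset ι) (f : ι → R) :
    D (∏ i ∈ s, f i) = ∑ k ∈ s, ∏ i ∈ s, Function.update f k (D (f k)) i := by
  induction s using Finset.induction_on with
  | empty => simpa using hD 1 1
  | insert a s ha ih =>
    rw [Finset.prod_insert ha, hD, ih, Finset.sum_insert ha, Finset.prod_insert ha,
      Function.update_self, Finset.prod_congr rfl fun i hi =>
        Function.update_of_ne (ne_of_mem_of_not_mem hi ha) _ _,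
      Finset.mul_sum, add_comm, mul_comm]
    congr 1
    refine Finset.sum_congr rfl fun k hk => ?_
    rw [Finset.prod_insert ha, Function.update_of_ne (ne_of_mem_of_not_mem hk ha).symm]

theorem map_det_of_leibniz {n : Type*} [Fintype n] [DecidableEq n] (A : Matrix n n R) :
    D A.det = ∑ k, (A.updateRow k fun j => D (A k j)).det := by
  have hrow (k : n) (σ : Equiv.Perm n) :
      ∏ i, Function.update (fun i => A i (σ i)) k (D (A k (σ k))) i =
        ∏ i, (A.updateRow k fun j => D (A k j)) i (σ i) := by
    refine Finset.prod_congr rfl fun i _ => ?_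
    rw [Function.update_apply, Matrix.updateRow_apply]
    split_ifs with h
    · subst h; rfl
    · rfl
  rw [← Matrix.det_transpose A, Matrix.det_apply, map_sum]
  simp_rw [← Matrix.det_transpose (A.updateRow _ _), Matrix.det_apply, Matrix.transpose_apply,
    Units.smul_def, map_zsmul, D.map_prod_of_leibniz hD, Finset.smul_sum, hrow]
  exact Finset.sum_comm

end AddMonoidHom

theorem Subring.det_mem {R : Type*} [CommRing R] (S : Subring R) {n : Type*} [Fintype n]
    [DecidableEq n] {A : Matrix n n R} (hA : ∀ i j, A i j ∈ S) : A.det ∈ S := by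
  let A' : Matrix n n S := Matrix.of fun i j => ⟨A i j, hA i j⟩
  have hA' : S.subtype.mapMatrix A' = A := rfl
  rw [← hA', ← RingHom.map_det]
  exact A'.det.2

theorem IsKxBasis.exists_eq_sum {K : Type} [Field K] {m : Polynomial (RatFunc K)}
    {W : Fin m.natDegree → AdjoinRoot m} (hW : IsKxBasis W) (f : AdjoinRoot m) :
    ∃ c : Fin m.natDegree → RatFunc K,
      f = ∑ i, algebraMap (RatFunc K) (AdjoinRoot m) (c i) * W i := by
  have hf : f ∈ Submodule.span (RatFunc K) (Set.range W) := hW.2 ▸ Submodule.mem_top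
  obtain ⟨c, hc⟩ := (Submodule.mem_span_range_iff_exists_fun _).mp hf
  exact ⟨c, by simp [← hc, Algebra.smul_def]⟩

section Expansion

open HahnSeries

variable {K F : Type} [Field K] [Field F] [Algebra K F] {m : Polynomial (RatFunc K)} {a : F}

-- `p ↦ p(a + t)`, the expansion around `a` in the variable `t = x - a`
def polyExpansion (a : F) : K[X] →+* nonnegSubring ℚ F :=
  eval₂RingHom
    (((HahnSeries.C : F →+* HahnSeries ℚ F).codRestrict _
      fun c => single_mem_nonnegSubring le_rfl c).comp (algebraMap K F))
    ⟨single 0 a + single 1 1,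
      add_mem (single_mem_nonnegSubring le_rfl a) (single_mem_nonnegSubring zero_le_one 1)⟩

@[simp]
theorem coe_polyExpansion_C (c : K) :
    (polyExpansion a (Polynomial.C c) : HahnSeries ℚ F) = single 0 (algebraMap K F c) := by
  simp only [polyExpansion, coe_eval₂RingHom, eval₂_C, RingHom.coe_comp, Function.comp_apply]
  rfl

@[simp]
theorem coe_polyExpansion_X :
    (polyExpansion (K := K) a X : HahnSeries ℚ F) = single 0 a + single 1 1 := by
  simp [polyExpansion]

theorem nonnegConstCoeff_polyExpansion (p : K[X]) :
    nonnegConstCoeff (polyExpansion a p) = aeval a p := by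
  refine RingHom.congr_fun (Polynomial.ringHom_ext (f := nonnegConstCoeff.comp (polyExpansion a))
    (g := (aeval a : K[X] →ₐ[K] F).toRingHom) (fun c => ?_) ?_) p
  · simp [nonnegConstCoeff_apply]
  · simp [nonnegConstCoeff_apply]

theorem orderTop_polyExpansion_pos_iff {p : K[X]} :
    0 < (polyExpansion a p : HahnSeries ℚ F).orderTop ↔ aeval a p = 0 := by
  rw [orderTop_pos_iff_coeff_zero (polyExpansion a p).2, ← nonnegConstCoeff_apply,
    nonnegConstCoeff_polyExpansion]

theorem orderTop_polyExpansion_eq_zero {p : K[X]} (hp : aeval a p ≠ 0) :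
    (polyExpansion a p : HahnSeries ℚ F).orderTop = 0 :=
  ((polyExpansion a p).2.lt_or_eq.resolve_left (mt orderTop_polyExpansion_pos_iff.mp hp)).symm

namespace EmbFamily

variable (σ : EmbFamily K F m a)

theorem emb_toA (i : Fin m.natDegree) (p : K[X]) : σ.emb i (toA m p) = polyExpansion a p := by
  refine RingHom.congr_fun (Polynomial.ringHom_ext
    (f := (σ.emb i).comp ((algebraMap (RatFunc K) (AdjoinRoot m)).comp (algebraMap K[X] _)))
    (g := (nonnegSubring ℚ F).subtype.comp (polyExpansion a)) (fun c => ?_) ?_) p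
  · exact (σ.emb_C i c).trans (coe_polyExpansion_C c).symm
  · exact (σ.emb_X i).trans coe_polyExpansion_X.symm

theorem emb_algebraMap_eq (i j : Fin m.natDegree) (r : RatFunc K) :
    σ.emb i (algebraMap (RatFunc K) (AdjoinRoot m) r) =
      σ.emb j (algebraMap (RatFunc K) (AdjoinRoot m) r) :=
  RingHom.congr_fun (IsFractionRing.ringHom_ext (A := K[X])
    (f1 := (σ.emb i).comp (algebraMap _ _)) (f2 := (σ.emb j).comp (algebraMap _ _))
    fun p => (σ.emb_toA i p).trans (σ.emb_toA j p).symm) r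

def expansionMatrix (W : Fin m.natDegree → AdjoinRoot m) :
    Matrix (Fin m.natDegree) (Fin m.natDegree) (HahnSeries ℚ F) :=
  Matrix.of fun i j => σ.emb j (W i)

theorem mul_hderiv_det_expansionMatrix [CharZero F] {D : AdjoinRoot m → AdjoinRoot m}
    (hD : IsDiffFamily D σ) {W : Fin m.natDegree → AdjoinRoot m} {e : K[X]}
    {M : Matrix (Fin m.natDegree) (Fin m.natDegree) K[X]} (hrel : DerivRel D W e M) :
    polyExpansion a e * hderiv (σ.expansionMatrix W).det =
      polyExpansion a M.trace * (σ.expansionMatrix W).det := by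
  set E := σ.expansionMatrix W
  have hrow (k : Fin m.natDegree) :
      (polyExpansion a e : HahnSeries ℚ F) • (fun j => hderiv (E k j)) =
        ∑ l, (polyExpansion a (M k l) : HahnSeries ℚ F) • E l := by
    funext j
    have := congrArg (σ.emb j) (hrel k)
    simp only [map_mul, map_sum, emb_toA, hD j] at this
    simpa [Finset.sum_apply, E, expansionMatrix] using this
  rw [show hderiv E.det = hderivAddHom F E.det from rfl,
    (hderivAddHom F).map_det_of_leibniz hderiv_mul, Finset.mul_sum, Matrix.trace, map_sum]
  push_cast
  rw [Finset.sum_mul]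
  refine Finset.sum_congr rfl fun k _ => ?_
  rw [← Matrix.det_updateRow_smul]
  exact (congrArg (fun r => (E.updateRow k r).det) (hrow k)).trans
    (Matrix.det_updateRow_sum E k _)

variable [Fact (Irreducible m)]

-- all embeddings agree on `K(x)` (`emb_algebraMap_eq`), so any one of them will do
def ratFuncEmb : RatFunc K →+* HahnSeries ℚ F :=
  (σ.emb ⟨0, (Fact.out : Irreducible m).natDegree_pos⟩).comp
    (algebraMap (RatFunc K) (AdjoinRoot m))

theorem emb_algebraMap (i : Fin m.natDegree) (r : RatFunc K) :
    σ.emb i (algebraMap (RatFunc K) (AdjoinRoot m) r) = σ.ratFuncEmb r :=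
  σ.emb_algebraMap_eq _ _ r

theorem ratFuncEmb_algebraMap (p : K[X]) :
    σ.ratFuncEmb (algebraMap K[X] (RatFunc K) p) = polyExpansion a p :=
  σ.emb_toA _ p

theorem noPoleAt_of_orderTop_nonneg {r : RatFunc K} (hr : 0 ≤ (σ.ratFuncEmb r).orderTop) :
    NoPoleAt a r := by
  have hr_denom : r * algebraMap K[X] (RatFunc K) r.denom = algebraMap K[X] (RatFunc K) r.num :=
    ((div_eq_iff (RatFunc.algebraMap_ne_zero r.denom_ne_zero)).mp r.num_div_denom).symm
  refine ⟨r.num, r.denom, fun hden => ?_, hr_denom⟩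
  have hnum : aeval a r.num ≠ 0 :=
    (aeval_ne_zero_of_isCoprime r.isCoprime_num_denom a).resolve_right (not_not.mpr hden)
  have key : σ.ratFuncEmb r * polyExpansion a r.denom = polyExpansion a r.num := by
    rw [← σ.ratFuncEmb_algebraMap, ← σ.ratFuncEmb_algebraMap, ← map_mul, hr_denom]
  have hpos := orderTop_mul_pos (orderTop_polyExpansion_pos_iff.mpr hden) hr
  rw [mul_comm, key, orderTop_polyExpansion_pos_iff] at hpos
  exact hnum hpos

theorem emb_sum_mul (W : Fin m.natDegree → AdjoinRoot m) (c : Fin m.natDegree → RatFunc K)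
    (j : Fin m.natDegree) :
    σ.emb j (∑ i, algebraMap (RatFunc K) (AdjoinRoot m) (c i) * W i) =
      ∑ i, σ.ratFuncEmb (c i) * σ.expansionMatrix W i j := by
  simp only [map_sum, map_mul, emb_algebraMap, expansionMatrix, Matrix.of_apply]

variable {W : Fin m.natDegree → AdjoinRoot m}

theorem det_expansionMatrix_ne_zero (hW : IsKxBasis W) : (σ.expansionMatrix W).det ≠ 0 := by
  intro h0
  obtain ⟨v, hv0, hv⟩ := Matrix.exists_mulVec_eq_zero_iff.mpr h0
  -- a kernel vector of `E` is a linear relation between distinct characters (Dedekind)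
  have hind : LinearIndependent (HahnSeries ℚ F)
      fun j => ⇑(σ.emb j : AdjoinRoot m →* HahnSeries ℚ F) :=
    (linearIndependent_monoidHom _ _).comp _ fun j k hjk =>
      σ.emb_injective (RingHom.ext fun x => DFunLike.congr_fun hjk x)
  refine hv0 (funext fun j => Fintype.linearIndependent_iff.mp hind v (funext fun f => ?_) j)
  obtain ⟨c, rfl⟩ := hW.exists_eq_sum f
  simp only [Finset.sum_apply, Pi.smul_apply, smul_eq_mul, MonoidHom.coe_coe, Pi.zero_apply]
  calc ∑ j, v j * σ.emb j (∑ i, algebraMap (RatFunc K) (AdjoinRoot m) (c i) * W i)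
      = ∑ i, σ.ratFuncEmb (c i) * (σ.expansionMatrix W).mulVec v i := by
        simp only [emb_sum_mul, Matrix.mulVec, dotProduct, Finset.mul_sum]
        rw [Finset.sum_comm]
        exact Finset.sum_congr rfl fun i _ => Finset.sum_congr rfl fun j _ => by ring
    _ = 0 := by simp [hv]

theorem orderTop_det_expansionMatrix [CharZero F] (hW : IsKxBasis W)
    {D : AdjoinRoot m → AdjoinRoot m} (hD : IsDiffFamily D σ) {e : K[X]}
    {M : Matrix (Fin m.natDegree) (Fin m.natDegree) K[X]} (hrel : DerivRel D W e M)
    (he : aeval a e ≠ 0) : (σ.expansionMatrix W).det.orderTop = 0 := by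
  obtain ⟨c, hc⟩ := WithTop.ne_top_iff_exists.mp
    (orderTop_ne_top.mpr (σ.det_expansionMatrix_ne_zero hW))
  rcases eq_or_ne c 0 with rfl | hc0
  · exact hc.symm
  have hval := congrArg orderTop (σ.mul_hderiv_det_expansionMatrix hD hrel)
  rw [orderTop_mul, orderTop_mul, orderTop_hderiv hc.symm hc0,
    orderTop_polyExpansion_eq_zero he, zero_add, ← hc] at hval
  have : (c : WithTop ℚ) ≤ ((-1 + c : ℚ) : WithTop ℚ) :=
    hval ▸ le_add_of_nonneg_left (polyExpansion a M.trace).2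
  have := WithTop.coe_le_coe.mp this
  linarith

theorem noPoleAt_of_locIntegralAt (hWint : ∀ i, LocIntegralAt σ (W i))
    (hdet : (σ.expansionMatrix W).det.orderTop = 0) {f : AdjoinRoot m} (hf : LocIntegralAt σ f)
    {c : Fin m.natDegree → RatFunc K}
    (hc : f = ∑ i, algebraMap (RatFunc K) (AdjoinRoot m) (c i) * W i) (i : Fin m.natDegree) :
    NoPoleAt a (c i) := by
  set E := σ.expansionMatrix W
  refine σ.noPoleAt_of_orderTop_nonneg ?_
  have hcramer : (E.updateRow i fun j => σ.emb j f).det = σ.ratFuncEmb (c i) * E.det := by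
    have hrow : (fun j => σ.emb j f) = ∑ l, σ.ratFuncEmb (c l) • E l := by
      funext j
      simp only [hc, emb_sum_mul, Finset.sum_apply, Pi.smul_apply, smul_eq_mul, E]
    rw [hrow, Matrix.det_updateRow_sum, smul_eq_mul]
  have hmem : (E.updateRow i fun j => σ.emb j f).det ∈ nonnegSubring ℚ F := by
    refine Subring.det_mem _ fun k j => ?_
    rw [Matrix.updateRow_apply]
    split_ifs
    exacts [hf j, hWint k j]
  rwa [mem_nonnegSubring, hcramer, orderTop_mul, hdet, add_zero] at hmem

theorem isLocalIntegralBasisAt_of_aeval_ne_zero [CharZero F] (hW : IsKxBasis W)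
    (hWint : ∀ i, LocIntegralAt σ (W i)) {D : AdjoinRoot m → AdjoinRoot m}
    (hD : IsDiffFamily D σ) {e : K[X]} {M : Matrix (Fin m.natDegree) (Fin m.natDegree) K[X]}
    (hrel : DerivRel D W e M) (he : aeval a e ≠ 0) : IsLocalIntegralBasisAt σ W := by
  refine ⟨hW, hWint, fun f hf => ?_⟩
  obtain ⟨c, hc⟩ := hW.exists_eq_sum f
  exact ⟨c, σ.noPoleAt_of_locIntegralAt hWint
    (σ.orderTop_det_expansionMatrix hW hD hrel he) hf hc, hc⟩

end EmbFamily

end Expansion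

section BasisChange

variable {K F : Type} [Field K] [Field F] [Algebra K F]

def noPoleSubring (a : F) : Subring (RatFunc K) where
  carrier := {r | NoPoleAt a r}
  zero_mem' := ⟨0, 1, by simp, by simp⟩
  one_mem' := ⟨1, 1, by simp, by simp⟩
  add_mem' := by
    rintro r s ⟨p, q, hq, hr⟩ ⟨p', q', hq', hs⟩
    refine ⟨p * q' + p' * q, q * q', by simp [hq, hq'], ?_⟩
    rw [map_add, map_mul, map_mul, map_mul, ← hr, ← hs]
    ring
  neg_mem' := by
    rintro r ⟨p, q, hq, hr⟩
    exact ⟨-p, q, hq, by rw [map_neg, neg_mul, hr]⟩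
  mul_mem' := by
    rintro r s ⟨p, q, hq, hr⟩ ⟨p', q', hq', hs⟩
    refine ⟨p * p', q * q', by simp [hq, hq'], ?_⟩
    rw [map_mul, map_mul, ← hr, ← hs]
    ring

theorem aeval_det_ne_zero_of_mul_eq_one {a : F} {n : Type*} [Fintype n] [DecidableEq n]
    {T : Matrix n n K[X]} {C : Matrix n n (RatFunc K)} (hC : ∀ i j, NoPoleAt a (C i j))
    (hTC : T.map (algebraMap K[X] (RatFunc K)) * C = 1) : aeval a T.det ≠ 0 := by
  obtain ⟨p, q, hq, hpq⟩ : NoPoleAt a C.det := Subring.det_mem (noPoleSubring a) hC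
  have hdet : T.det * p = q := by
    refine IsFractionRing.injective K[X] (RatFunc K) ?_
    rw [map_mul, ← hpq, ← mul_assoc, RingHom.map_det, RingHom.mapMatrix_apply,
      ← Matrix.det_mul, hTC, Matrix.det_one, one_mul]
  intro h0
  exact hq (by rw [← hdet, map_mul, h0, zero_mul])

theorem IsLocalIntegralBasisAt.aeval_det_ne_zero {m : Polynomial (RatFunc K)} {a : F}
    {σ : EmbFamily K F m a} {W U : Fin m.natDegree → AdjoinRoot m}
    (hW : IsLocalIntegralBasisAt σ W) (hU : ∀ j, LocIntegralAt σ (U j))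
    {T : Matrix (Fin m.natDegree) (Fin m.natDegree) K[X]}
    (hWT : ∀ i, W i = ∑ j, toA m (T i j) * U j) : aeval a T.det ≠ 0 := by
  choose C hC hUC using fun j => hW.2.2 (U j) (hU j)
  refine aeval_det_ne_zero_of_mul_eq_one (C := Matrix.of C) (fun i j => hC i j) ?_
  -- `W = T U = T C W`, and `W` is linearly independent
  ext i l
  refine Fintype.linearIndependent_iffₛ.mp hW.1.1 _ _ ?_ l
  calc ∑ l, (T.map (algebraMap K[X] (RatFunc K)) * Matrix.of C) i l • W l
      = ∑ j, algebraMap K[X] (RatFunc K) (T i j) • ∑ l, C j l • W l := by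
        simp only [Matrix.mul_apply, Matrix.map_apply, Matrix.of_apply, Finset.sum_smul,
          Finset.smul_sum, mul_smul]
        exact Finset.sum_comm
    _ = W i := by
        simp only [hWT i, hUC, Algebra.smul_def, toA]
    _ = ∑ l, (1 : Matrix (Fin m.natDegree) (Fin m.natDegree) (RatFunc K)) i l • W l := by
        simp [Matrix.one_apply]

end BasisChange

theorem root_of_e_of_root_of_det_general {K : Type} [Field K] [CharZero K]
    (m : Polynomial (RatFunc K)) [Fact (Irreducible m)]
    (D : AdjoinRoot m → AdjoinRoot m)
    (σ : ∀ a : AlgebraicClosure K, EmbFamily K (AlgebraicClosure K) m a)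
    (hσ : ∀ a, IsDiffFamily D (σ a))
    (W U : Fin m.natDegree → AdjoinRoot m)
    (e : Polynomial K) (M : Matrix (Fin m.natDegree) (Fin m.natDegree) (Polynomial K))
    -- `W` is a suitable basis:
    (hWb : IsKxBasis W) (hrel : DerivRel D W e M) (hWint : ∀ i, IntegralElem σ (W i))
    -- `U` is an integral basis:
    (hU : IsIntegralBasis σ U)
    -- `W = TU`:
    (T : Matrix (Fin m.natDegree) (Fin m.natDegree) (Polynomial K))
    (hWT : ∀ i, W i = ∑ j, toA m (T i j) * U j)
    (a : AlgebraicClosure K) :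
    (Polynomial.aeval a T.det = 0 → Polynomial.aeval a e = 0) ∧
      (¬ IsLocalIntegralBasisAt (σ a) W → Polynomial.aeval a e = 0) := by
  have hlocal (he : aeval a e ≠ 0) : IsLocalIntegralBasisAt (σ a) W :=
    (σ a).isLocalIntegralBasisAt_of_aeval_ne_zero hWb (fun i => hWint i a) (hσ a) hrel he
  exact ⟨fun hdet => by_contra fun he =>
      (hlocal he).aeval_det_ne_zero (fun j => hU.2.1 j a) hWT hdet,
    fun hW => by_contra fun he => hW (hlocal he)⟩

/-- Let `W` be a suitable basis and `U` an integral basis of `A`, and let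
`T ∈ K[x]^{n×n}` be such that `W = TU`. Let `e ∈ K[x]` and `M ∈ K[x]^{n×n}` be such that
`eW′ = MW` with `gcd(e, entries of M) = 1`. If `a ∈ K̄` is a root of `det(T)`, then `a` is a
root of `e`. Consequently, if `W` is not a local integral basis at some `a ∈ K̄`, then `a`
is a root of `e`. -/
theorem root_of_e_of_root_of_det {K : Type} [Field K] [CharZero K]
    (m : Polynomial (RatFunc K)) [Fact (Irreducible m)]
    (D : AdjoinRoot m → AdjoinRoot m) (hD : IsDerivationOnA m D)
    (σ : ∀ a : AlgebraicClosure K, EmbFamily K (AlgebraicClosure K) m a)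
    (hσ : ∀ a, IsDiffFamily D (σ a))
    (W U : Fin m.natDegree → AdjoinRoot m)
    (e : Polynomial K) (M : Matrix (Fin m.natDegree) (Fin m.natDegree) (Polynomial K))
    -- `W` is a suitable basis:
    (hWb : IsKxBasis W) (hrel : DerivRel D W e M) (hgcd : GcdOne e M)
    (hsqf : Squarefree e) (hWint : ∀ i, IntegralElem σ (W i))
    -- `U` is an integral basis:
    (hU : IsIntegralBasis σ U)
    -- `W = TU`:
    (T : Matrix (Fin m.natDegree) (Fin m.natDegree) (Polynomial K))
    (hWT : ∀ i, W i = ∑ j, toA m (T i j) * U j)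
    (a : AlgebraicClosure K) :
    (Polynomial.aeval a T.det = 0 → Polynomial.aeval a e = 0) ∧
      (¬ IsLocalIntegralBasisAt (σ a) W → Polynomial.aeval a e = 0) :=
  root_of_e_of_root_of_det_general m D σ hσ W U e M hWb hrel hWint hU T hWT a
end
end

section
/- Let W = (ω_1,…,ω_n) be a suitable basis of A with eW′ = MW, and let h = Σ_{i=1}^n (h_i/(de)) ω_i with h_i, d ∈ K[x], gcd(d, e) = 1, gcd(h_1,…,h_n, d) = 1, and d squarefree. If h is integrable in A, then d is a constant in K. -/
noncomputable section
open scoped Classical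

open Polynomial

/-!
Write the antiderivative as `H = Σ (p_i/q) ω_i` with `gcd(q, p_1, …, p_n) = 1`. Multiplying
`(qH)′ = q h + q′ H` by `d e q` and comparing coordinates (via `e W′ = M W`) gives the identities
`q² h_i + d e q′ p_i = d q (e p_i′ + Σ_j p_j M_{ji})`. Let `π` be an irreducible factor of `d`, so
`π ∤ e` and `π² ∤ d`. If `π ∤ q`, the identities show that `π` divides every `h_i`, contradicting
`gcd(h_1, …, h_n, d) = 1`. If `π^k ∥ q` with `k ≥ 1`, they force `π^k ∣ q′`; but in characteristic
zero `π` is separable, so `π^(k-1) ∥ q′`.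
-/

namespace Polynomial

variable {K : Type*} [Field K] [CharZero K] {π : K[X]}

theorem not_dvd_derivative_of_irreducible (hπ : Irreducible π) : ¬π ∣ derivative π :=
  fun h => hπ.not_isUnit (hπ.separable.isUnit_of_dvd' dvd_rfl h)

theorem not_pow_succ_dvd_derivative_pow_succ_mul (hπ : Irreducible π) {q : K[X]} (hq : ¬π ∣ q)
    (k : ℕ) : ¬π ^ (k + 1) ∣ derivative (π ^ (k + 1) * q) := by
  intro h
  have hexp : derivative (π ^ (k + 1) * q)
      = π ^ k * (C ((k + 1 : ℕ) : K) * derivative π * q) + π ^ (k + 1) * derivative q := by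
    rw [derivative_mul, derivative_pow, Nat.add_sub_cancel]
    ring
  rw [hexp, dvd_add_left (dvd_mul_right _ _), pow_succ,
    mul_dvd_mul_iff_left (pow_ne_zero k hπ.ne_zero)] at h
  have hunit : IsUnit (C ((k + 1 : ℕ) : K)) :=
    isUnit_C.mpr (IsUnit.mk0 _ (Nat.cast_ne_zero.mpr k.succ_ne_zero))
  refine hπ.prime.not_dvd_mul (hπ.prime.not_dvd_mul ?_ (not_dvd_derivative_of_irreducible hπ)) hq h
  exact fun hC => hπ.not_isUnit (isUnit_of_dvd_unit hC hunit)

section CoordinateIdentity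

variable {ι : Type*} {d e q : K[X]} {c p t : ι → K[X]}

theorem not_dvd_of_mul_self_add_eq (hπ : Irreducible π) (hπd : π ∣ d) (hπ2 : ¬π * π ∣ d)
    (hπe : ¬π ∣ e) (hq0 : q ≠ 0) (hqp : ∀ g, g ∣ q → (∀ i, g ∣ p i) → IsUnit g)
    (key : ∀ i, q * q * c i + d * e * derivative q * p i = d * q * t i) : ¬π ∣ q := by
  intro hπq
  obtain ⟨i, hpi⟩ : ∃ i, ¬π ∣ p i := by
    by_contra! hall
    exact hπ.not_isUnit (hqp π hπq hall)
  obtain ⟨k, q₁, hq₁, rfl⟩ := WfDvdMonoid.max_power_factor hq0 hπ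
  obtain ⟨k, rfl⟩ : ∃ j, k = j + 1 := Nat.exists_eq_succ_of_ne_zero <| by
    rintro rfl
    exact hq₁ (by simpa using hπq)
  obtain ⟨d₁, rfl⟩ := hπd
  have hd₁ : ¬π ∣ d₁ := fun ⟨s, hs⟩ => hπ2 ⟨s, by rw [hs]; ring⟩
  set Q := π ^ (k + 1) * q₁
  -- `π^(k+2)` divides both `π d₁ Q t_i` and `Q² c_i`, hence `π d₁ e Q′ p_i`
  have hdvd : π * π ^ (k + 1) ∣ π * (d₁ * e * p i * derivative Q) := by
    have hrw : π * (d₁ * e * p i * derivative Q) = π * d₁ * Q * t i - Q * Q * c i := by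
      linear_combination key i
    rw [hrw]
    exact dvd_sub (Dvd.intro (d₁ * q₁ * t i) (by ring)) (Dvd.intro (π ^ k * q₁ * q₁ * c i) (by ring))
  have hπQ' := hπ.prime.pow_dvd_of_dvd_mul_left (k + 1)
    (hπ.prime.not_dvd_mul (hπ.prime.not_dvd_mul hd₁ hπe) hpi)
    ((mul_dvd_mul_iff_left hπ.ne_zero).mp hdvd)
  exact not_pow_succ_dvd_derivative_pow_succ_mul hπ hq₁ k hπQ'

theorem dvd_of_mul_self_add_eq (hπ : Irreducible π) (hπd : π ∣ d) (hπ2 : ¬π * π ∣ d)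
    (hπe : ¬π ∣ e) (hq0 : q ≠ 0) (hqp : ∀ g, g ∣ q → (∀ i, g ∣ p i) → IsUnit g)
    (key : ∀ i, q * q * c i + d * e * derivative q * p i = d * q * t i) (i : ι) : π ∣ c i := by
  have hπq := not_dvd_of_mul_self_add_eq hπ hπd hπ2 hπe hq0 hqp key
  have hdvd : π ∣ q * q * c i := by
    rw [show q * q * c i = d * (q * t i - e * derivative q * p i) by linear_combination key i]
    exact hπd.mul_right _
  exact (hπ.prime.dvd_mul.mp hdvd).resolve_left (hπ.prime.not_dvd_mul hπq hπq)

end CoordinateIdentity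

end Polynomial

theorem RatFunc.exists_reduced_common_denom {K ι : Type*} [Field K] [Fintype ι]
    (r : ι → RatFunc K) :
    ∃ (q : K[X]) (p : ι → K[X]), q ≠ 0 ∧ (∀ g, g ∣ q → (∀ i, g ∣ p i) → IsUnit g) ∧
      ∀ i, algebraMap K[X] (RatFunc K) q * r i = algebraMap K[X] (RatFunc K) (p i) := by
  obtain ⟨⟨Q, hQ⟩, hint⟩ :=
    IsLocalization.exist_integer_multiples (nonZeroDivisors K[X]) Finset.univ r
  choose P hP using fun i => hint i (Finset.mem_univ i)
  obtain ⟨g, hfg, hg⟩ :=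
    Finset.extract_gcd (fun o : Option ι => o.elim Q P) (s := Finset.univ) Finset.univ_nonempty
  set G := Finset.univ.gcd fun o : Option ι => o.elim Q P
  have hQG : Q = G * g none := hfg none (Finset.mem_univ _)
  have hQ0 : Q ≠ 0 := nonZeroDivisors.ne_zero hQ
  have hG0 : algebraMap K[X] (RatFunc K) G ≠ 0 :=
    RatFunc.algebraMap_ne_zero (left_ne_zero_of_mul (hQG ▸ hQ0))
  refine ⟨g none, fun i => g (some i), right_ne_zero_of_mul (hQG ▸ hQ0), ?_, fun i => ?_⟩
  · intro u hu hup
    refine isUnit_of_dvd_one (hg ▸ Finset.dvd_gcd fun o _ => ?_)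
    cases o with
    | none => exact hu
    | some i => exact hup i
  · apply mul_left_cancel₀ hG0
    rw [← mul_assoc, ← map_mul, ← map_mul, ← hQG, ← hfg (some i) (Finset.mem_univ _)]
    exact (Algebra.smul_def Q (r i)).symm.trans (hP i).symm

section FunctionField

variable {K : Type} [Field K] {m : Polynomial (RatFunc K)}

theorem toA_add (p q : K[X]) : toA m (p + q) = toA m p + toA m q := by
  simp only [toA, map_add]

theorem toA_mul (p q : K[X]) : toA m (p * q) = toA m p * toA m q := by
  simp only [toA, map_mul]

theorem toA_sum {ι : Type*} (s : Finset ι) (p : ι → K[X]) :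
    toA m (∑ i ∈ s, p i) = ∑ i ∈ s, toA m (p i) := by
  simp only [toA, map_sum]

theorem IsDerivationOnA.map_sum {D : AdjoinRoot m → AdjoinRoot m} (hD : IsDerivationOnA m D)
    {ι : Type*} (s : Finset ι) (f : ι → AdjoinRoot m) :
    D (∑ i ∈ s, f i) = ∑ i ∈ s, D (f i) :=
  _root_.map_sum (AddMonoidHom.mk' D hD.map_add) f s

variable {W : Fin m.natDegree → AdjoinRoot m}

theorem exists_reduced_coords (hW : Submodule.span (RatFunc K) (Set.range W) = ⊤)
    (H : AdjoinRoot m) :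
    ∃ (q : K[X]) (p : Fin m.natDegree → K[X]), q ≠ 0 ∧
      (∀ g, g ∣ q → (∀ i, g ∣ p i) → IsUnit g) ∧ toA m q * H = ∑ i, toA m (p i) * W i := by
  obtain ⟨r, hr⟩ := (Submodule.mem_span_range_iff_exists_fun (RatFunc K)).mp
    (hW ▸ Submodule.mem_top : H ∈ Submodule.span (RatFunc K) (Set.range W))
  obtain ⟨q, p, hq0, hqp, hpr⟩ := RatFunc.exists_reduced_common_denom r
  refine ⟨q, p, hq0, hqp, ?_⟩
  rw [← hr, Finset.mul_sum]
  refine Finset.sum_congr rfl fun i _ => ?_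
  rw [Algebra.smul_def, ← mul_assoc, toA, toA, ← map_mul, hpr]

theorem eq_of_sum_toA_mul_eq (hW : LinearIndependent (RatFunc K) W) {a b : Fin m.natDegree → K[X]}
    (h : ∑ i, toA m (a i) * W i = ∑ i, toA m (b i) * W i) (i : Fin m.natDegree) : a i = b i :=
  RatFunc.algebraMap_injective K <|
    Fintype.linearIndependent_iffₛ.mp hW _ _ (by simp only [Algebra.smul_def]; exact h) i

variable {D : AdjoinRoot m → AdjoinRoot m} {e : K[X]}
  {M : Matrix (Fin m.natDegree) (Fin m.natDegree) K[X]}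

theorem DerivRel.toA_mul_D_sum (hD : IsDerivationOnA m D) (hrel : DerivRel D W e M)
    (p : Fin m.natDegree → K[X]) :
    toA m e * D (∑ i, toA m (p i) * W i)
      = ∑ i, toA m (e * derivative (p i) + ∑ j, p j * M j i) * W i := by
  have hterm : ∀ i, toA m e * D (toA m (p i) * W i)
      = toA m (e * derivative (p i)) * W i + ∑ j, toA m (p i * M i j) * W j := by
    intro i
    rw [hD.leibniz, hD.map_poly, mul_add, ← mul_assoc, mul_comm (toA m e), mul_assoc, hrel i,
      Finset.mul_sum]
    simp only [toA_mul]
    rw [add_comm]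
    congr 1
    · ring
    · exact Finset.sum_congr rfl fun j _ => by ring
  simp only [hD.map_sum, Finset.mul_sum, hterm, Finset.sum_add_distrib, toA_add, toA_sum,
    add_mul, Finset.sum_mul]
  rw [Finset.sum_comm (f := fun i j => toA m (p i * M i j) * W j)]

theorem coeff_identity_of_eq_derivative (hD : IsDerivationOnA m D)
    (hW : LinearIndependent (RatFunc K) W) (hrel : DerivRel D W e M)
    {d q : K[X]} {c p : Fin m.natDegree → K[X]} {h H : AdjoinRoot m}
    (hrep : toA m d * toA m e * h = ∑ i, toA m (c i) * W i)
    (hqH : toA m q * H = ∑ i, toA m (p i) * W i) (hH : h = D H) (i : Fin m.natDegree) :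
    q * q * c i + d * e * derivative q * p i
      = d * q * (e * derivative (p i) + ∑ j, p j * M j i) := by
  have hsum : ∑ i, toA m (q * q * c i + d * e * derivative q * p i) * W i
      = ∑ i, toA m (d * q * (e * derivative (p i) + ∑ j, p j * M j i)) * W i :=
    calc ∑ i, toA m (q * q * c i + d * e * derivative q * p i) * W i
        = toA m q * toA m q * (toA m d * toA m e * h)
          + toA m d * toA m e * toA m (derivative q) * (toA m q * H) := by
          simp only [hrep, hqH, Finset.mul_sum, ← Finset.sum_add_distrib, toA_add, toA_mul]
          exact Finset.sum_congr rfl fun i _ => by ring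
      _ = toA m d * toA m q * (toA m e * D (toA m q * H)) := by
          rw [hD.leibniz, hD.map_poly, ← hH]
          ring
      _ = ∑ i, toA m (d * q * (e * derivative (p i) + ∑ j, p j * M j i)) * W i := by
          rw [hqH, hrel.toA_mul_D_sum hD, Finset.mul_sum]
          exact Finset.sum_congr rfl fun i _ => by rw [toA_mul, toA_mul]; ring
  exact eq_of_sum_toA_mul_eq hW hsum i

end FunctionField

theorem d_is_constant_of_integrable_general {K : Type} [Field K] [CharZero K]
    (m : Polynomial (RatFunc K))
    (D : AdjoinRoot m → AdjoinRoot m) (hD : IsDerivationOnA m D)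
    (W : Fin m.natDegree → AdjoinRoot m)
    (e : Polynomial K) (M : Matrix (Fin m.natDegree) (Fin m.natDegree) (Polynomial K))
    -- `W` is a suitable basis:
    (hWb : IsKxBasis W) (hrel : DerivRel D W e M)
    (h : AdjoinRoot m) (hc : Fin m.natDegree → Polynomial K) (d : Polynomial K)
    -- `h = Σ (h_i/(de)) ω_i`:
    (hrep : toA m d * toA m e * h = ∑ i, toA m (hc i) * W i)
    (hde : IsCoprime d e)
    (hhd : ∀ p : Polynomial K, p ∣ d → (∀ i, p ∣ hc i) → IsUnit p)
    (hdsqf : Squarefree d)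
    -- `h` is integrable in `A`:
    (hint : ∃ H : AdjoinRoot m, h = D H) :
    ∃ c : K, d = Polynomial.C c := by
  obtain ⟨H, hH⟩ := hint
  obtain ⟨q, p, hq0, hqp, hqH⟩ := exists_reduced_coords hWb.2 H
  have key := coeff_identity_of_eq_derivative hD hWb.1 hrel hrep hqH hH
  have hdu : IsUnit d := by
    by_contra hdu
    obtain ⟨π, hπ, hπd⟩ := WfDvdMonoid.exists_irreducible_factor hdu hdsqf.ne_zero
    have hπ2 : ¬π * π ∣ d := fun h2 => hπ.not_isUnit (hdsqf π h2)
    have hπe : ¬π ∣ e := fun hπe => hπ.not_isUnit (hde.isUnit_of_dvd' hπd hπe)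
    exact hπ.not_isUnit (hhd π hπd (dvd_of_mul_self_add_eq hπ hπd hπ2 hπe hq0 hqp key))
  obtain ⟨c, -, hc⟩ := Polynomial.isUnit_iff.mp hdu
  exact ⟨c, hc.symm⟩

/-- Let `W = (ω₁,…,ωₙ)` be a suitable basis of `A` with `eW′ = MW`, and let
`h = Σ (h_i/(de)) ω_i` with `h_i, d ∈ K[x]`, `gcd(d, e) = 1`, `gcd(h₁,…,hₙ, d) = 1`, and `d`
squarefree. If `h` is integrable in `A`, then `d` is a constant in `K`. -/
theorem d_is_constant_of_integrable {K : Type} [Field K] [CharZero K]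
    (m : Polynomial (RatFunc K)) [Fact (Irreducible m)]
    (D : AdjoinRoot m → AdjoinRoot m) (hD : IsDerivationOnA m D)
    (σ : ∀ a : AlgebraicClosure K, EmbFamily K (AlgebraicClosure K) m a)
    (hσ : ∀ a, IsDiffFamily D (σ a))
    (W : Fin m.natDegree → AdjoinRoot m)
    (e : Polynomial K) (M : Matrix (Fin m.natDegree) (Fin m.natDegree) (Polynomial K))
    -- `W` is a suitable basis:
    (hWb : IsKxBasis W) (hrel : DerivRel D W e M) (hgcd : GcdOne e M)
    (hesqf : Squarefree e) (hWint : ∀ i, IntegralElem σ (W i))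
    (h : AdjoinRoot m) (hc : Fin m.natDegree → Polynomial K) (d : Polynomial K)
    (hd0 : d ≠ 0) (he0 : e ≠ 0)
    -- `h = Σ (h_i/(de)) ω_i`:
    (hrep : toA m d * toA m e * h = ∑ i, toA m (hc i) * W i)
    (hde : IsCoprime d e)
    (hhd : ∀ p : Polynomial K, p ∣ d → (∀ i, p ∣ hc i) → IsUnit p)
    (hdsqf : Squarefree d)
    -- `h` is integrable in `A`:
    (hint : ∃ H : AdjoinRoot m, h = D H) :
    ∃ c : K, d = Polynomial.C c :=
  d_is_constant_of_integrable_general m D hD W e M hWb hrel h hc d hrep hde hhd hdsqf hint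
end
end
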